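/- arXiv:2406.07665 — 15 statements merged into one kernel-verified Lean document; each statement's English description precedes it below -/
import Mathlib

section
/- Let L be a finite complemented bounded lattice such that the map x ↦ x⁺⁺ from L to the power set of L is injective, and let a ∈ L with a⁺⁺ ≠ {a}. Then there exists b ∈ a⁺⁺ with b⁺⁺ = {b}. -/
variable {L : Type*} [Lattice L] [BoundedOrder L]

/-- The set of all complements of an element `a`. -/
def plusSet (a : L) : Set L := {x | a ⊔ x = ⊤ ∧ a ⊓ x = ⊥}

/-- The set of all common complements of the elements of a set `A`. -/
def PlusSet (A : Set L) : Set L := {x | ∀ a ∈ A, a ⊔ x = ⊤ ∧ a ⊓ x = ⊥}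

lemma mem_plusplus_self (a : L) : a ∈ PlusSet (plusSet a) := by
  intro x hx
  exact ⟨by rw [sup_comm]; exact hx.1, by rw [inf_comm]; exact hx.2⟩

lemma plusSet_subset_of_mem {a b : L} (hb : b ∈ PlusSet (plusSet a)) :
    plusSet a ⊆ plusSet b := by
  intro x hx
  obtain ⟨h1, h2⟩ := hb x hx
  exact ⟨by rw [sup_comm]; exact h1, by rw [inf_comm]; exact h2⟩

lemma PlusSet_anti {A B : Set L} (h : A ⊆ B) : PlusSet B ⊆ PlusSet A :=
  fun _ hx a haA => hx a (h haA)

theorem stmt_5 {L : Type*} [Lattice L] [BoundedOrder L] [Finite L]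
    (hnt : (⊥ : L) ≠ ⊤)
    (hcompl : ∀ x : L, ∃ y : L, x ⊔ y = ⊤ ∧ x ⊓ y = ⊥)
    (hinj : Function.Injective (fun x : L => PlusSet (plusSet x)))
    (a : L) (ha : PlusSet (plusSet a) ≠ {a}) :
    ∃ b ∈ PlusSet (plusSet a), PlusSet (plusSet b) = {b} := by
  obtain ⟨b, hb, hmin⟩ := Set.exists_min_image (PlusSet (plusSet a))
    (fun x => (PlusSet (plusSet x)).ncard) (Set.toFinite _)
    ⟨a, mem_plusplus_self a⟩
  refine ⟨b, hb, ?_⟩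
  apply Set.eq_singleton_iff_unique_mem.mpr
  refine ⟨mem_plusplus_self b, fun c hc => ?_⟩
  have hsubb : PlusSet (plusSet b) ⊆ PlusSet (plusSet a) :=
    PlusSet_anti (plusSet_subset_of_mem hb)
  have hca : c ∈ PlusSet (plusSet a) := hsubb hc
  have hsubc : PlusSet (plusSet c) ⊆ PlusSet (plusSet b) :=
    PlusSet_anti (plusSet_subset_of_mem hc)
  have heq : PlusSet (plusSet c) = PlusSet (plusSet b) :=
    Set.eq_of_subset_of_ncard_le hsubc (hmin c hca) (Set.toFinite _)
  exact hinj heq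
end

section
/- Let L be a complemented bounded lattice and consider the statements: (i) x⁺ ∨ y⁺ ≤₁ (x ∧ y)⁺ for all x, y ∈ L; (ii) for all x, y ∈ L, x ≤ y implies y⁺ ≤₁ x⁺; (iii) (x ∨ y)⁺ ≤₁ x⁺ ∧ y⁺ for all x, y ∈ L. Then (i) implies (ii), and (ii) is equivalent to (iii). -/
variable {L : Type*} [Lattice L] [BoundedOrder L]

/-- Elementwise join of two sets. -/
def setVee (A B : Set L) : Set L := {z | ∃ x ∈ A, ∃ y ∈ B, z = x ⊔ y}

/-- Elementwise meet of two sets. -/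
def setWedge (A B : Set L) : Set L := {z | ∃ x ∈ A, ∃ y ∈ B, z = x ⊓ y}

/-- `A ≤₁ B`: every element of `A` is below some element of `B`. -/
def le₁ (A B : Set L) : Prop := ∀ x ∈ A, ∃ y ∈ B, x ≤ y

theorem stmt_6 {L : Type*} [Lattice L] [BoundedOrder L]
    (hnt : (⊥ : L) ≠ ⊤)
    (hcompl : ∀ x : L, ∃ y : L, x ⊔ y = ⊤ ∧ x ⊓ y = ⊥) :
    ((∀ x y : L, le₁ (setVee (plusSet x) (plusSet y)) (plusSet (x ⊓ y))) →
        (∀ x y : L, x ≤ y → le₁ (plusSet y) (plusSet x))) ∧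
      ((∀ x y : L, x ≤ y → le₁ (plusSet y) (plusSet x)) ↔
        (∀ x y : L, le₁ (plusSet (x ⊔ y)) (setWedge (plusSet x) (plusSet y)))) := by
  constructor
  · intro h1 x y hxy z hz
    obtain ⟨c, hc⟩ := hcompl x
    have hmem : (c ⊔ z) ∈ setVee (plusSet x) (plusSet y) := ⟨c, hc, z, hz, rfl⟩
    obtain ⟨w, hw, hle⟩ := h1 x y _ hmem
    rw [inf_eq_left.mpr hxy] at hw
    exact ⟨w, hw, le_trans le_sup_right hle⟩
  · constructor
    · intro h2 x y z hz
      obtain ⟨a, ha, hza⟩ := h2 x (x ⊔ y) le_sup_left z hz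
      obtain ⟨b, hb, hzb⟩ := h2 y (x ⊔ y) le_sup_right z hz
      exact ⟨a ⊓ b, ⟨a, ha, b, hb, rfl⟩, le_inf hza hzb⟩
    · intro h3 x y hxy z hz
      have : (x ⊔ y) = y := sup_eq_right.mpr hxy
      obtain ⟨w, ⟨a, ha, b, hb, rfl⟩, hle⟩ := h3 x y z (by rwa [this])
      exact ⟨a, ha, le_trans hle inf_le_left⟩
end

section
/- Let L be a complemented modular bounded lattice. Then the following are equivalent: (i) x⁺⁺ = {x} for every x ∈ L; (ii) for every x ∈ L and every y ∈ x⁺⁺ there exists z ∈ y⁺ satisfying either (x ∨ y) ∧ z = 0 or (x ∧ y) ∨ z = 1. -/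
variable {L : Type*} [Lattice L] [BoundedOrder L]

theorem stmt_7 {L : Type*} [Lattice L] [BoundedOrder L]
    (hnt : (⊥ : L) ≠ ⊤)
    (hcompl : ∀ x : L, ∃ y : L, x ⊔ y = ⊤ ∧ x ⊓ y = ⊥)
    (hmod : ∀ x y z : L, x ≤ z → x ⊔ (y ⊓ z) = (x ⊔ y) ⊓ z) :
    (∀ x : L, PlusSet (plusSet x) = {x}) ↔
      (∀ x : L, ∀ y ∈ PlusSet (plusSet x), ∃ z ∈ plusSet y,
        (x ⊔ y) ⊓ z = ⊥ ∨ (x ⊓ y) ⊔ z = ⊤) := by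
  constructor
  · intro h x y hy
    have hyx : y = x := by
      have := hy
      rw [h x] at this
      exact this
    subst hyx
    obtain ⟨z, hz1, hz2⟩ := hcompl y
    exact ⟨z, ⟨hz1, hz2⟩, Or.inl (by simp [hz2])⟩
  · intro h x
    ext y
    simp only [Set.mem_singleton_iff]
    constructor
    · intro hy
      obtain ⟨z, ⟨hzsup, hzinf⟩, hcase⟩ := h x y hy
      obtain ⟨t, ht1, ht2⟩ := hcompl x
      have hyt := hy t ⟨ht1, ht2⟩
      rcases hcase with hc | hc
      · -- (x ⊔ y) ⊓ z = ⊥ gives x ≤ y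
        have hxy : x ⊔ y = y := by
          have hm := hmod y z (x ⊔ y) le_sup_right
          rw [hzsup, top_inf_eq, inf_comm z (x ⊔ y), hc, sup_bot_eq] at hm
          exact hm.symm
        have hxley : x ≤ y := le_sup_left.trans hxy.le
        have hm := hmod x t y hxley
        rw [ht1, top_inf_eq, hyt.2, sup_bot_eq] at hm
        exact hm.symm
      · -- (x ⊓ y) ⊔ z = ⊤ gives y ≤ x
        have hyx : x ⊓ y = y := by
          have hm := hmod (x ⊓ y) z y inf_le_right
          rw [hc, top_inf_eq, inf_comm z y, hzinf, sup_bot_eq] at hm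
          exact hm
        have hylex : y ≤ x := hyx.ge.trans inf_le_left
        have hm := hmod y t x hylex
        rw [sup_comm y t, hyt.1, inf_comm t x, ht2, sup_bot_eq] at hm
        -- hm : y = ⊤ ⊓ x
        rw [hm, top_inf_eq]
    · intro hy
      subst hy
      intro a ⟨ha1, ha2⟩
      exact ⟨by rw [sup_comm]; exact ha1, by rw [inf_comm]; exact ha2⟩
end

section
/- Let L be a complemented modular bounded lattice and a, b, c ∈ L. Then: (i) if there exists y ∈ b → c with a ≤ y (i.e., a ≤₁ b → c), then a ∧ b ≤ c; (ii) a ∧ b ≤ c if and only if there exists y ∈ b → c with a ∧ b ≤ y (i.e., a ∧ b ≤₁ b → c). -/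
variable {L : Type*} [Lattice L] [BoundedOrder L]

/-- The "unsharp implication" `a → b := {z ⊔ (a ⊓ b) | z ∈ a⁺}`. -/
def arrowSet (a b : L) : Set L := {y | ∃ z ∈ plusSet a, y = z ⊔ (a ⊓ b)}

theorem stmt_8 {L : Type*} [Lattice L] [BoundedOrder L]
    (hnt : (⊥ : L) ≠ ⊤)
    (hcompl : ∀ x : L, ∃ y : L, x ⊔ y = ⊤ ∧ x ⊓ y = ⊥)
    (hmod : ∀ x y z : L, x ≤ z → x ⊔ (y ⊓ z) = (x ⊔ y) ⊓ z)
    (a b c : L) :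
    ((∃ y ∈ arrowSet b c, a ≤ y) → a ⊓ b ≤ c) ∧
      (a ⊓ b ≤ c ↔ ∃ y ∈ arrowSet b c, a ⊓ b ≤ y) := by
  have key : ∀ d : L, (∃ y ∈ arrowSet b c, d ≤ y) → d ⊓ b ≤ c := by
    rintro d ⟨y, ⟨z, ⟨hz1, hz2⟩, rfl⟩, hdy⟩
    have h : (z ⊔ (b ⊓ c)) ⊓ b = b ⊓ c := by
      have hm := hmod (b ⊓ c) z b inf_le_left
      rw [inf_comm z b, hz2, sup_bot_eq] at hm
      rw [sup_comm, ← hm]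
    calc d ⊓ b ≤ (z ⊔ (b ⊓ c)) ⊓ b := inf_le_inf_right b hdy
      _ = b ⊓ c := h
      _ ≤ c := inf_le_right
  refine ⟨key a, ⟨fun h => ?_, fun h => by simpa using key (a ⊓ b) h⟩⟩
  obtain ⟨z, hz⟩ := hcompl b
  exact ⟨z ⊔ (b ⊓ c), ⟨z, hz, rfl⟩, le_trans (le_inf inf_le_right h) le_sup_right⟩
end

section
/- Let L be a complemented bounded lattice and a, b ∈ L. Then: (i) a → 0 = a⁺ and 1 → a = {a}; (ii) if a ≤ b then a → b = {1}; (iii) a → b = {1} if and only if a ∧ b ∈ a⁺⁺; (iv) if b ∈ a⁺ then a → b = a⁺. -/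
variable {L : Type*} [Lattice L] [BoundedOrder L]

theorem stmt_9 {L : Type*} [Lattice L] [BoundedOrder L]
    (hnt : (⊥ : L) ≠ ⊤)
    (hcompl : ∀ x : L, ∃ y : L, x ⊔ y = ⊤ ∧ x ⊓ y = ⊥)
    (a b : L) :
    (arrowSet a ⊥ = plusSet a ∧ arrowSet ⊤ a = {a}) ∧
      (a ≤ b → arrowSet a b = {⊤}) ∧
      (arrowSet a b = {⊤} ↔ a ⊓ b ∈ PlusSet (plusSet a)) ∧
      (b ∈ plusSet a → arrowSet a b = plusSet a) := by
  obtain ⟨c, hc1, hc2⟩ := hcompl a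
  have hc : c ∈ plusSet a := ⟨hc1, hc2⟩
  refine ⟨⟨?_, ?_⟩, ?_, ?_, ?_⟩
  · -- arrowSet a ⊥ = plusSet a
    ext y
    constructor
    · rintro ⟨z, hz, rfl⟩
      simpa using hz
    · intro hy
      exact ⟨y, hy, by simp⟩
  · -- arrowSet ⊤ a = {a}
    ext y
    constructor
    · rintro ⟨z, ⟨_, hz2⟩, rfl⟩
      simp only [top_inf_eq] at hz2 ⊢
      simp [hz2]
    · rintro rfl
      exact ⟨⊥, ⟨by simp, by simp⟩, by simp⟩
  · -- a ≤ b → arrowSet a b = {⊤}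
    intro hab
    have hiab : a ⊓ b = a := inf_eq_left.mpr hab
    ext y
    constructor
    · rintro ⟨z, ⟨hz1, _⟩, rfl⟩
      simp [hiab, sup_comm, hz1]
    · rintro rfl
      exact ⟨c, hc, by simp [hiab, sup_comm, hc1]⟩
  · -- arrowSet a b = {⊤} ↔ a ⊓ b ∈ PlusSet (plusSet a)
    constructor
    · intro h z hz
      have hmem : z ⊔ (a ⊓ b) ∈ arrowSet a b := ⟨z, hz, rfl⟩
      rw [h] at hmem
      refine ⟨hmem, ?_⟩
      have hle : z ⊓ (a ⊓ b) ≤ ⊥ := by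
        calc z ⊓ (a ⊓ b) ≤ a ⊓ z := le_inf (inf_le_right.trans inf_le_left) inf_le_left
        _ = ⊥ := hz.2
      exact le_bot_iff.mp hle
    · intro h
      ext y
      constructor
      · rintro ⟨z, hz, rfl⟩
        have := (h z hz).1
        simp [this]
      · rintro rfl
        refine ⟨c, hc, ?_⟩
        have := (h c hc).1
        exact this.symm
  · -- b ∈ plusSet a → arrowSet a b = plusSet a
    intro hb
    have : a ⊓ b = ⊥ := hb.2
    ext y
    constructor
    · rintro ⟨z, hz, rfl⟩
      simpa [this] using hz
    · intro hy
      exact ⟨y, hy, by simp [this]⟩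
end

section
/- Let L be a complemented bounded lattice and a, b, c ∈ L. Then: (i) if b ≤ c then a → b ≤₁ a → c and a → b ≤₂ a → c; (ii) if a → b = a → c = {1} and a⁺⁺ is closed under ∧, then a → (b ∧ c) = {1}; (iii) if a⁺⁺ ⊆ b⁺⁺ and a → b = {1}, then b → a = {1}. -/
variable {L : Type*} [Lattice L] [BoundedOrder L]

/-- `A ≤₂ B`: below every element of `B` there is some element of `A`. -/
def le₂ (A B : Set L) : Prop := ∀ y ∈ B, ∃ x ∈ A, x ≤ y

/-- If `a → b = {⊤}` then `a ⊓ b` is a common complement of all complements of `a`. -/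
lemma inf_mem_plusplus {a b : L} (hab : arrowSet a b = {⊤}) :
    a ⊓ b ∈ PlusSet (plusSet a) := by
  intro z hz
  have hmem : z ⊔ (a ⊓ b) ∈ arrowSet a b := ⟨z, hz, rfl⟩
  rw [hab] at hmem
  refine ⟨hmem, ?_⟩
  have : z ⊓ (a ⊓ b) ≤ a ⊓ z := le_inf (le_trans inf_le_right inf_le_left) inf_le_left
  exact le_bot_iff.mp (hz.2 ▸ this)

theorem stmt_10 {L : Type*} [Lattice L] [BoundedOrder L]
    (hnt : (⊥ : L) ≠ ⊤)
    (hcompl : ∀ x : L, ∃ y : L, x ⊔ y = ⊤ ∧ x ⊓ y = ⊥)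
    (a b c : L) :
    (b ≤ c → le₁ (arrowSet a b) (arrowSet a c) ∧ le₂ (arrowSet a b) (arrowSet a c)) ∧
      (arrowSet a b = {⊤} → arrowSet a c = {⊤} →
        (∀ x ∈ PlusSet (plusSet a), ∀ y ∈ PlusSet (plusSet a),
          x ⊓ y ∈ PlusSet (plusSet a)) →
        arrowSet a (b ⊓ c) = {⊤}) ∧
      (PlusSet (plusSet a) ⊆ PlusSet (plusSet b) → arrowSet a b = {⊤} →
        arrowSet b a = {⊤}) := by
  refine ⟨?_, ?_, ?_⟩
  · intro hbc
    constructor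
    · rintro x ⟨z, hz, rfl⟩
      exact ⟨z ⊔ (a ⊓ c), ⟨z, hz, rfl⟩, sup_le_sup_left (inf_le_inf_left a hbc) z⟩
    · rintro y ⟨z, hz, rfl⟩
      exact ⟨z ⊔ (a ⊓ b), ⟨z, hz, rfl⟩, sup_le_sup_left (inf_le_inf_left a hbc) z⟩
  · intro hab hac hcl
    have hmem := hcl _ (inf_mem_plusplus hab) _ (inf_mem_plusplus hac)
    have heq : (a ⊓ b) ⊓ (a ⊓ c) = a ⊓ (b ⊓ c) := by
      rw [inf_inf_inf_comm, inf_idem]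
    rw [heq] at hmem
    ext y
    simp only [Set.mem_singleton_iff]
    constructor
    · rintro ⟨z, hz, rfl⟩
      exact (hmem z hz).1
    · rintro rfl
      obtain ⟨z, hz⟩ := hcompl a
      exact ⟨z, hz, ((hmem z hz).1).symm⟩
  · intro hsub hab
    have hmem := hsub (inf_mem_plusplus hab)
    ext y
    simp only [Set.mem_singleton_iff]
    constructor
    · rintro ⟨w, hw, rfl⟩
      rw [inf_comm b a]
      exact (hmem w hw).1
    · rintro rfl
      obtain ⟨w, hw⟩ := hcompl b
      exact ⟨w, hw, by rw [inf_comm b a, (hmem w hw).1]⟩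
end

section
/- Let L be a complemented bounded lattice and a ∈ L. Then the following are equivalent: (i) for all x ∈ L, a → x = {1} if and only if a ≤ x; (ii) a is a minimal element of a⁺⁺ (i.e., a ∈ a⁺⁺ and no y ∈ a⁺⁺ satisfies y < a). -/
variable {L : Type*} [Lattice L] [BoundedOrder L]

theorem stmt_11 {L : Type*} [Lattice L] [BoundedOrder L]
    (hnt : (⊥ : L) ≠ ⊤)
    (hcompl : ∀ x : L, ∃ y : L, x ⊔ y = ⊤ ∧ x ⊓ y = ⊥)
    (a : L) :
    (∀ x : L, arrowSet a x = {⊤} ↔ a ≤ x) ↔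
      (a ∈ PlusSet (plusSet a) ∧ ∀ y ∈ PlusSet (plusSet a), ¬ y < a) := by
  have hmem : a ∈ PlusSet (plusSet a) := fun z hz =>
    ⟨by rw [sup_comm]; exact hz.1, by rw [inf_comm]; exact hz.2⟩
  constructor
  · intro h
    refine ⟨hmem, fun y hy hlt => ?_⟩
    have hya : a ⊓ y = y := inf_eq_right.mpr hlt.le
    have hax : arrowSet a y = {⊤} := by
      ext w
      simp only [arrowSet, Set.mem_setOf_eq, Set.mem_singleton_iff]
      constructor
      · rintro ⟨z, hz, rfl⟩
        rw [hya]
        exact (hy z hz).1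
      · rintro rfl
        obtain ⟨z, hz⟩ := hcompl a
        exact ⟨z, hz, by rw [hya, (hy z hz).1]⟩
    exact hlt.not_ge ((h y).mp hax)
  · rintro ⟨-, hmin⟩ x
    constructor
    · intro hax
      have hy : a ⊓ x ∈ PlusSet (plusSet a) := by
        intro z hz
        have h1 : z ⊔ (a ⊓ x) ∈ arrowSet a x := ⟨z, hz, rfl⟩
        rw [hax] at h1
        refine ⟨h1, le_bot_iff.mp ?_⟩
        calc z ⊓ (a ⊓ x) ≤ z ⊓ a := inf_le_inf_left z inf_le_left
        _ = ⊥ := by rw [inf_comm]; exact hz.2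
      have hle : a ⊓ x ≤ a := inf_le_left
      have : a ⊓ x = a := hle.lt_or_eq.resolve_left (hmin _ hy)
      exact inf_eq_left.mp this
    · intro hax
      have hxa : a ⊓ x = a := inf_eq_left.mpr hax
      ext w
      simp only [arrowSet, Set.mem_setOf_eq, Set.mem_singleton_iff]
      constructor
      · rintro ⟨z, hz, rfl⟩
        rw [hxa, sup_comm]
        exact hz.1
      · rintro rfl
        obtain ⟨z, hz⟩ := hcompl a
        exact ⟨z, hz, by rw [hxa, sup_comm, hz.1]⟩
end

section
/- Let L be a complemented modular bounded lattice and a, b ∈ L. Then: (i) {a ∧ y | y ∈ a → b} = {a ∧ b} and a ∧ b ≤ b (Modus Ponens); (ii) if every element of a⁺ is ≤ every element of b⁺, then {y ∧ z | y ∈ a → b, z ∈ b⁺} = a⁺ (Modus Tollens). -/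
variable {L : Type*} [Lattice L] [BoundedOrder L]

theorem stmt_12 {L : Type*} [Lattice L] [BoundedOrder L]
    (hnt : (⊥ : L) ≠ ⊤)
    (hcompl : ∀ x : L, ∃ y : L, x ⊔ y = ⊤ ∧ x ⊓ y = ⊥)
    (hmod : ∀ x y z : L, x ≤ z → x ⊔ (y ⊓ z) = (x ⊔ y) ⊓ z)
    (a b : L) :
    ({w | ∃ y ∈ arrowSet a b, w = a ⊓ y} = {a ⊓ b} ∧ a ⊓ b ≤ b) ∧
      ((∀ x ∈ plusSet a, ∀ y ∈ plusSet b, x ≤ y) →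
        {w | ∃ y ∈ arrowSet a b, ∃ z ∈ plusSet b, w = y ⊓ z} = plusSet a) := by
  have key : ∀ z : L, a ⊓ z = ⊥ → a ⊓ (z ⊔ (a ⊓ b)) = a ⊓ b := by
    intro z hz
    have h := hmod (a ⊓ b) z a inf_le_left
    rw [inf_comm z a, hz, sup_bot_eq] at h
    rw [inf_comm, sup_comm z (a ⊓ b)]; exact h.symm
  constructor
  · constructor
    · ext w
      simp only [Set.mem_setOf_eq, Set.mem_singleton_iff, arrowSet, plusSet]
      constructor
      · rintro ⟨y, ⟨z, ⟨-, hz⟩, rfl⟩, rfl⟩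
        exact key z hz
      · rintro rfl
        obtain ⟨z, hz1, hz2⟩ := hcompl a
        exact ⟨z ⊔ (a ⊓ b), ⟨z, ⟨hz1, hz2⟩, rfl⟩, (key z hz2).symm⟩
    · exact inf_le_right
  · intro H
    have key2 : ∀ z' ∈ plusSet a, ∀ z ∈ plusSet b, (z' ⊔ (a ⊓ b)) ⊓ z = z' := by
      intro z' hz' z hz
      have hle : z' ≤ z := H z' hz' z hz
      have h := hmod z' (a ⊓ b) z hle
      have hb : (a ⊓ b) ⊓ z = ⊥ := by
        have : (a ⊓ b) ⊓ z ≤ b ⊓ z := inf_le_inf_right z inf_le_right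
        rw [hz.2] at this
        exact le_bot_iff.mp this
      rw [hb, sup_bot_eq] at h
      exact h.symm
    ext w
    simp only [Set.mem_setOf_eq]
    constructor
    · rintro ⟨y, ⟨z', hz', rfl⟩, z, hz, rfl⟩
      rw [key2 z' hz' z hz]
      exact hz'
    · intro hw
      obtain ⟨z, hz1, hz2⟩ := hcompl b
      exact ⟨w ⊔ (a ⊓ b), ⟨w, hw, rfl⟩, z, ⟨hz1, hz2⟩, (key2 w hw z ⟨hz1, hz2⟩).symm⟩
end

section
/- Let L be a complemented modular bounded lattice and a, b, c ∈ L. Then: (i) if c ∈ a → b then a → c = a → b; (ii) a → (a → b) = a → b, where a → B := ⋃_{y ∈ B} (a → y) for B ⊆ L; (iii) if every element of a⁺ is ≤ b, then a → b = {b}. -/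
variable {L : Type*} [Lattice L] [BoundedOrder L]

theorem stmt_13 {L : Type*} [Lattice L] [BoundedOrder L]
    (hnt : (⊥ : L) ≠ ⊤)
    (hcompl : ∀ x : L, ∃ y : L, x ⊔ y = ⊤ ∧ x ⊓ y = ⊥)
    (hmod : ∀ x y z : L, x ≤ z → x ⊔ (y ⊓ z) = (x ⊔ y) ⊓ z)
    (a b c : L) :
    (c ∈ arrowSet a b → arrowSet a c = arrowSet a b) ∧
      (⋃ y ∈ arrowSet a b, arrowSet a y) = arrowSet a b ∧
      ((∀ x ∈ plusSet a, x ≤ b) → arrowSet a b = {b}) := by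
  -- key lemma: if c ∈ arrowSet a b then a ⊓ c = a ⊓ b
  have key : ∀ d : L, d ∈ arrowSet a b → a ⊓ d = a ⊓ b := by
    rintro d ⟨z, ⟨hz1, hz2⟩, rfl⟩
    have h := hmod (a ⊓ b) z a inf_le_left
    rw [inf_comm z a, hz2, sup_bot_eq] at h
    rw [inf_comm a (z ⊔ a ⊓ b)]
    rw [sup_comm (a ⊓ b) z] at h
    exact h.symm
  have arrEq : ∀ d : L, d ∈ arrowSet a b → arrowSet a d = arrowSet a b := by
    intro d hd
    have h := key d hd
    unfold arrowSet
    simp only [h]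
  refine ⟨arrEq c, ?_, ?_⟩
  · ext w
    simp only [Set.mem_iUnion]
    constructor
    · rintro ⟨y, hy, hw⟩
      rwa [arrEq y hy] at hw
    · intro hw
      obtain ⟨z, hz1, hz2⟩ := hcompl a
      refine ⟨z ⊔ (a ⊓ b), ⟨z, ⟨hz1, hz2⟩, rfl⟩, ?_⟩
      rwa [arrEq _ ⟨z, ⟨hz1, hz2⟩, rfl⟩]
  · intro hle
    ext w
    constructor
    · rintro ⟨z, ⟨hz1, hz2⟩, rfl⟩
      have h := hmod z a b (hle z ⟨hz1, hz2⟩)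
      rw [sup_comm z a, hz1, top_inf_eq] at h
      exact h
    · rintro rfl
      obtain ⟨z, hz1, hz2⟩ := hcompl a
      refine ⟨z, ⟨hz1, hz2⟩, ?_⟩
      have h := hmod z a w (hle z ⟨hz1, hz2⟩)
      rw [sup_comm z a, hz1, top_inf_eq] at h
      exact h.symm
end

section
/- Let L be a complemented bounded lattice and a, b, c ∈ L. Then: (i) 0 ⊙ a = a ⊙ 0 = {0}; (ii) 1 ⊙ a = a ⊙ 1 = {a}; (iii) every element w of a ⊙ b satisfies a ∧ b ≤ w ≤ b, and if b ≤ a then a ⊙ b = {b}; (iv) if a ≤ b then a ⊙ c ≤₁ b ⊙ c and a ⊙ c ≤₂ b ⊙ c. -/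
variable {L : Type*} [Lattice L] [BoundedOrder L]

/-- The "unsharp conjunction" `a ⊙ b := {b ⊓ (a ⊔ z) | z ∈ b⁺}`. -/
def odotSet (a b : L) : Set L := {w | ∃ z ∈ plusSet b, w = b ⊓ (a ⊔ z)}

theorem stmt_14 {L : Type*} [Lattice L] [BoundedOrder L]
    (hnt : (⊥ : L) ≠ ⊤)
    (hcompl : ∀ x : L, ∃ y : L, x ⊔ y = ⊤ ∧ x ⊓ y = ⊥)
    (a b c : L) :
    (odotSet ⊥ a = {⊥} ∧ odotSet a ⊥ = {⊥}) ∧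
      (odotSet ⊤ a = {a} ∧ odotSet a ⊤ = {a}) ∧
      ((∀ w ∈ odotSet a b, a ⊓ b ≤ w ∧ w ≤ b) ∧ (b ≤ a → odotSet a b = {b})) ∧
      (a ≤ b → le₁ (odotSet a c) (odotSet b c) ∧ le₂ (odotSet a c) (odotSet b c)) := by
  refine ⟨⟨?_, ?_⟩, ⟨?_, ?_⟩, ⟨?_, ?_⟩, ?_⟩
  · ext w
    constructor
    · rintro ⟨z, ⟨hz1, hz2⟩, rfl⟩
      simp [bot_sup_eq, hz2]
    · rintro rfl
      obtain ⟨z, hz⟩ := hcompl a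
      exact ⟨z, hz, by simp [bot_sup_eq, hz.2]⟩
  · ext w
    constructor
    · rintro ⟨z, hz, rfl⟩
      simp
    · rintro rfl
      exact ⟨⊤, ⟨by simp, by simp⟩, by simp⟩
  · ext w
    constructor
    · rintro ⟨z, hz, rfl⟩
      simp
    · rintro rfl
      obtain ⟨z, hz⟩ := hcompl w
      exact ⟨z, hz, by simp⟩
  · ext w
    constructor
    · rintro ⟨z, ⟨hz1, hz2⟩, rfl⟩
      simp only [top_inf_eq] at hz2 ⊢
      simp [hz2]
    · rintro rfl
      exact ⟨⊥, ⟨by simp, by simp⟩, by simp⟩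
  · rintro w ⟨z, hz, rfl⟩
    exact ⟨le_inf inf_le_right (le_trans inf_le_left le_sup_left), inf_le_left⟩
  · intro hba
    ext w
    constructor
    · rintro ⟨z, hz, rfl⟩
      have : b ≤ a ⊔ z := le_trans hba le_sup_left
      simp [inf_eq_left.mpr this]
    · rintro rfl
      obtain ⟨z, hz⟩ := hcompl w
      exact ⟨z, hz, (inf_eq_left.mpr (le_trans hba le_sup_left)).symm⟩
  · intro hab
    constructor
    · rintro w ⟨z, hz, rfl⟩
      exact ⟨c ⊓ (b ⊔ z), ⟨z, hz, rfl⟩,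
        inf_le_inf_left _ (sup_le_sup_right hab _)⟩
    · rintro y ⟨z, hz, rfl⟩
      exact ⟨c ⊓ (a ⊔ z), ⟨z, hz, rfl⟩,
        inf_le_inf_left _ (sup_le_sup_right hab _)⟩
end

section
/- Let L be a complemented modular bounded lattice and a, b ∈ L. Then a ≤ b if and only if a ⊙ b = {a}, and moreover (a ⊙ b) ⊙ b = a ⊙ b, where for A ⊆ L one sets A ⊙ b := {b ∧ (w ∨ z) | w ∈ A, z ∈ b⁺}. -/
variable {L : Type*} [Lattice L] [BoundedOrder L]

/-- `A ⊙ b := {b ⊓ (w ⊔ z) | w ∈ A, z ∈ b⁺}` for a set `A`. -/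
def odotSetLeft (A : Set L) (b : L) : Set L :=
  {u | ∃ w ∈ A, ∃ z ∈ plusSet b, u = b ⊓ (w ⊔ z)}

theorem stmt_15 {L : Type*} [Lattice L] [BoundedOrder L]
    (hnt : (⊥ : L) ≠ ⊤)
    (hcompl : ∀ x : L, ∃ y : L, x ⊔ y = ⊤ ∧ x ⊓ y = ⊥)
    (hmod : ∀ x y z : L, x ≤ z → x ⊔ (y ⊓ z) = (x ⊔ y) ⊓ z)
    (a b : L) :
    (a ≤ b ↔ odotSet a b = {a}) ∧
      odotSetLeft (odotSet a b) b = odotSet a b := by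
  -- key fact: if w ≤ b and z is a complement of b, then b ⊓ (w ⊔ z) = w
  have key : ∀ w z : L, w ≤ b → z ∈ plusSet b → b ⊓ (w ⊔ z) = w := by
    intro w z hw hz
    have := hmod w z b hw
    rw [inf_comm z b, hz.2, sup_bot_eq] at this
    rw [inf_comm, ← this]
  constructor
  · constructor
    · intro hab
      ext x
      simp only [odotSet, Set.mem_setOf_eq, Set.mem_singleton_iff]
      constructor
      · rintro ⟨z, hz, rfl⟩
        exact key a z hab hz
      · rintro rfl
        obtain ⟨z, hz⟩ := hcompl b
        exact ⟨z, hz, (key x z hab hz).symm⟩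
    · intro h
      obtain ⟨z, hz⟩ := hcompl b
      have : b ⊓ (a ⊔ z) ∈ odotSet a b := ⟨z, hz, rfl⟩
      rw [h, Set.mem_singleton_iff] at this
      rw [← this]
      exact inf_le_left
  · ext x
    simp only [odotSetLeft, Set.mem_setOf_eq]
    constructor
    · rintro ⟨w, hw, z, hz, rfl⟩
      have hwb : w ≤ b := by
        obtain ⟨z', _, rfl⟩ := hw
        exact inf_le_left
      rw [key w z hwb hz]
      exact hw
    · intro hx
      obtain ⟨z, hz⟩ := hcompl b
      have hxb : x ≤ b := by
        obtain ⟨z', _, rfl⟩ := hx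
        exact inf_le_left
      exact ⟨x, hx, z, hz, (key x z hxb hz).symm⟩
end

section
/- Let L be a complemented modular bounded lattice and a, b, c ∈ L. Then every element of a ⊙ b is ≤ c if and only if a ≤ every element of b → c; i.e., a ⊙ b ≤ {c} if and only if {a} ≤ b → c (adjointness of ⊙ and →). -/
variable {L : Type*} [Lattice L] [BoundedOrder L]

theorem stmt_16 {L : Type*} [Lattice L] [BoundedOrder L]
    (hnt : (⊥ : L) ≠ ⊤)
    (hcompl : ∀ x : L, ∃ y : L, x ⊔ y = ⊤ ∧ x ⊓ y = ⊥)
    (hmod : ∀ x y z : L, x ≤ z → x ⊔ (y ⊓ z) = (x ⊔ y) ⊓ z)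
    (a b c : L) :
    (∀ w ∈ odotSet a b, w ≤ c) ↔ (∀ y ∈ arrowSet b c, a ≤ y) := by
  constructor
  · rintro h y ⟨z, ⟨hsup, hinf⟩, rfl⟩
    have hle : b ⊓ (a ⊔ z) ≤ b ⊓ c :=
      le_inf inf_le_left (h _ ⟨z, ⟨hsup, hinf⟩, rfl⟩)
    have key : z ⊔ (b ⊓ (a ⊔ z)) = a ⊔ z := by
      rw [hmod z b (a ⊔ z) le_sup_right, sup_comm z b, hsup, top_inf_eq]
    calc a ≤ a ⊔ z := le_sup_left
      _ = z ⊔ (b ⊓ (a ⊔ z)) := key.symm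
      _ ≤ z ⊔ (b ⊓ c) := sup_le_sup_left hle z
  · rintro h w ⟨z, ⟨hsup, hinf⟩, rfl⟩
    have ha : a ≤ z ⊔ (b ⊓ c) := h _ ⟨z, ⟨hsup, hinf⟩, rfl⟩
    have : b ⊓ (a ⊔ z) ≤ b ⊓ (z ⊔ (b ⊓ c)) := by
      refine inf_le_inf_left b (sup_le (ha.trans ?_) le_sup_left)
      exact le_rfl
    have heq : b ⊓ (z ⊔ (b ⊓ c)) = b ⊓ c := by
      rw [inf_comm b (z ⊔ (b ⊓ c)), sup_comm z (b ⊓ c),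
        ← hmod (b ⊓ c) z b inf_le_left, inf_comm z b, hinf, sup_bot_eq]
    exact this.trans (heq.le.trans inf_le_right)
end

section
/- Let L be a complemented bounded lattice and D a deductive system of L. Then: (i) D is an order filter of L, i.e., if a ∈ D and a ≤ b then b ∈ D; (ii) if moreover x → y ⊆ D for all x, y ∈ D, then D is a lattice filter of L, i.e., D is upward closed and closed under ∧. Conversely, if L is in addition modular, then every lattice filter F of L is a deductive system of L. -/
variable {L : Type*} [Lattice L] [BoundedOrder L]

/-- A deductive system: contains `⊤` and is closed under the generalized Modus Ponens. -/
def IsDeductiveSystem (D : Set L) : Prop :=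
  ⊤ ∈ D ∧ ∀ a ∈ D, ∀ b : L, arrowSet a b ⊆ D → b ∈ D

/-- A lattice filter: nonempty, upward closed and closed under meets. -/
def IsLatticeFilter (F : Set L) : Prop :=
  F.Nonempty ∧ (∀ x ∈ F, ∀ y : L, x ≤ y → y ∈ F) ∧ ∀ x ∈ F, ∀ y ∈ F, x ⊓ y ∈ F

theorem stmt_17 {L : Type*} [Lattice L] [BoundedOrder L]
    (hnt : (⊥ : L) ≠ ⊤)
    (hcompl : ∀ x : L, ∃ y : L, x ⊔ y = ⊤ ∧ x ⊓ y = ⊥)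
    (D : Set L) (hD : IsDeductiveSystem D) :
    (∀ a ∈ D, ∀ b : L, a ≤ b → b ∈ D) ∧
      ((∀ x ∈ D, ∀ y ∈ D, arrowSet x y ⊆ D) → IsLatticeFilter D) ∧
      ((∀ x y z : L, x ≤ z → x ⊔ (y ⊓ z) = (x ⊔ y) ⊓ z) →
        ∀ F : Set L, IsLatticeFilter F → IsDeductiveSystem F) := by
  obtain ⟨htop, hMP⟩ := hD
  have ord : ∀ a ∈ D, ∀ b : L, a ≤ b → b ∈ D := by
    intro a ha b hab
    apply hMP a ha b
    rintro y ⟨z, ⟨hz1, _⟩, rfl⟩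
    have : a ⊓ b = a := inf_eq_left.mpr hab
    rw [this, sup_comm, hz1]
    exact htop
  refine ⟨ord, ?_, ?_⟩
  · intro h
    refine ⟨⟨⊤, htop⟩, ord, ?_⟩
    intro x hx y hy
    apply hMP x hx (x ⊓ y)
    have : arrowSet x (x ⊓ y) = arrowSet x y := by
      unfold arrowSet
      simp [inf_assoc]
    rw [this]
    exact h x hx y hy
  · intro hmod F ⟨⟨w, hw⟩, hup, hmeet⟩
    refine ⟨hup w hw ⊤ le_top, ?_⟩
    intro a ha b harr
    obtain ⟨z, hz1, hz2⟩ := hcompl a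
    have h1 : z ⊔ (a ⊓ b) ∈ F := harr ⟨z, ⟨hz1, hz2⟩, rfl⟩
    have h2 : a ⊓ (z ⊔ (a ⊓ b)) ∈ F := hmeet a ha _ h1
    have key : a ⊓ (z ⊔ (a ⊓ b)) = a ⊓ b := by
      have := hmod (a ⊓ b) z a inf_le_left
      rw [inf_comm z a, hz2, sup_bot_eq] at this
      rw [inf_comm, sup_comm z (a ⊓ b), ← this]
    rw [key] at h2
    exact hup _ h2 b inf_le_right
end

section
/- Let L be a complemented modular bounded lattice and Φ a congruence of the meet-semilattice (L, ∧) (an equivalence relation such that (a,b) ∈ Φ and (c,d) ∈ Φ imply (a ∧ c, b ∧ d) ∈ Φ). Then: (i) the class [1]Φ = {x ∈ L | (x,1) ∈ Φ} is a deductive system of L; (ii) Θ([1]Φ) ⊆ Φ, where Θ(D) := {(x,y) ∈ L × L | x → y ⊆ D and y → x ⊆ D}. -/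
variable {L : Type*} [Lattice L] [BoundedOrder L]

theorem stmt_18 {L : Type*} [Lattice L] [BoundedOrder L]
    (hnt : (⊥ : L) ≠ ⊤)
    (hcompl : ∀ x : L, ∃ y : L, x ⊔ y = ⊤ ∧ x ⊓ y = ⊥)
    (hmod : ∀ x y z : L, x ≤ z → x ⊔ (y ⊓ z) = (x ⊔ y) ⊓ z)
    (Φ : L → L → Prop) (hequiv : Equivalence Φ)
    (hcong : ∀ a b c d : L, Φ a b → Φ c d → Φ (a ⊓ c) (b ⊓ d)) :
    IsDeductiveSystem {x : L | Φ x ⊤} ∧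
      ∀ x y : L, arrowSet x y ⊆ {z : L | Φ z ⊤} → arrowSet y x ⊆ {z : L | Φ z ⊤} →
        Φ x y := by
  -- key: if arrowSet a b ⊆ [⊤], then Φ (a ⊓ b) a
  have key : ∀ a b : L, arrowSet a b ⊆ {z : L | Φ z ⊤} → Φ (a ⊓ b) a := by
    intro a b hab
    obtain ⟨z, hz1, hz2⟩ := hcompl a
    have hz : z ∈ plusSet a := ⟨hz1, hz2⟩
    have hmem : Φ (z ⊔ (a ⊓ b)) ⊤ := hab ⟨z, hz, rfl⟩
    have heq : a ⊓ (z ⊔ (a ⊓ b)) = a ⊓ b := by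
      have := hmod (a ⊓ b) z a inf_le_left
      rw [inf_comm z a, hz2, sup_bot_eq] at this
      rw [inf_comm, sup_comm z (a ⊓ b), ← this]
    have := hcong a a (z ⊔ (a ⊓ b)) ⊤ (hequiv.refl a) hmem
    rw [heq, inf_top_eq] at this
    exact this
  constructor
  · refine ⟨hequiv.refl ⊤, ?_⟩
    intro a ha b hab
    have h1 : Φ (a ⊓ b) a := key a b hab
    have h2 : Φ (a ⊓ b) ⊤ := hequiv.trans h1 ha
    have h3 : Φ (a ⊓ b ⊓ b) (⊤ ⊓ b) := hcong _ _ _ _ h2 (hequiv.refl b)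
    rw [inf_assoc, inf_idem, top_inf_eq] at h3
    exact hequiv.trans (hequiv.symm h3) h2
  · intro x y hxy hyx
    have h1 : Φ (x ⊓ y) x := key x y hxy
    have h2 : Φ (y ⊓ x) y := key y x hyx
    rw [inf_comm] at h2
    exact hequiv.trans (hequiv.symm h1) h2
end

section
/- Let L be a complemented bounded lattice and Φ an equivalence relation on L having the Substitution Property with respect to → (i.e., (a,b) ∈ Φ implies (a → c) × (b → c) ⊆ Φ for all c ∈ L). Then: (i) Φ has the Substitution Property with respect to ⁺ (i.e., (a,b) ∈ Φ implies a⁺ × b⁺ ⊆ Φ); (ii) [1]Φ = {x ∈ L | (x,1) ∈ Φ} is a deductive system of L; (iii) Φ ⊆ Θ([1]Φ), where Θ(D) := {(x,y) ∈ L × L | x → y ⊆ D and y → x ⊆ D}. -/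
variable {L : Type*} [Lattice L] [BoundedOrder L]

theorem stmt_19 {L : Type*} [Lattice L] [BoundedOrder L]
    (hnt : (⊥ : L) ≠ ⊤)
    (hcompl : ∀ x : L, ∃ y : L, x ⊔ y = ⊤ ∧ x ⊓ y = ⊥)
    (Φ : L → L → Prop) (hequiv : Equivalence Φ)
    (hsp : ∀ a b : L, Φ a b → ∀ c : L, ∀ u ∈ arrowSet a c, ∀ v ∈ arrowSet b c, Φ u v) :
    (∀ a b : L, Φ a b → ∀ u ∈ plusSet a, ∀ v ∈ plusSet b, Φ u v) ∧
      IsDeductiveSystem {x : L | Φ x ⊤} ∧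
      (∀ a b : L, Φ a b →
        arrowSet a b ⊆ {x : L | Φ x ⊤} ∧ arrowSet b a ⊆ {x : L | Φ x ⊤}) := by
  refine ⟨?_, ⟨hequiv.refl ⊤, ?_⟩, ?_⟩
  · intro a b hab u hu v hv
    exact hsp a b hab ⊥ u ⟨u, hu, by simp⟩ v ⟨v, hv, by simp⟩
  · intro a ha b hsub
    obtain ⟨z, hz1, hz2⟩ := hcompl a
    have hu : z ⊔ (a ⊓ b) ∈ arrowSet a b := ⟨z, ⟨hz1, hz2⟩, rfl⟩
    have h1 : Φ (z ⊔ (a ⊓ b)) ⊤ := hsub hu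
    have hvb : b ∈ arrowSet ⊤ b := ⟨⊥, ⟨by simp, by simp⟩, by simp⟩
    have h2 : Φ (z ⊔ (a ⊓ b)) b := hsp a ⊤ ha b _ hu b hvb
    exact hequiv.trans (hequiv.symm h2) h1
  · intro a b hab
    obtain ⟨zb, hzb⟩ := hcompl b
    obtain ⟨za, hza⟩ := hcompl a
    constructor
    · intro u hu
      have htop : ⊤ ∈ arrowSet b b := ⟨zb, hzb, by rw [inf_idem, sup_comm]; exact hzb.1.symm⟩
      exact hsp a b hab b u hu ⊤ htop
    · intro u hu
      have htop : ⊤ ∈ arrowSet a a := ⟨za, hza, by rw [inf_idem, sup_comm]; exact hza.1.symm⟩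
      exact hsp b a (hequiv.symm hab) a u hu ⊤ htop
end
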